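/- Assume the values h_k over slots k with Π(k) ≠ 0 are pairwise distinct, and let (q, p) be a maximizer of Problem (P). If for some j with 1 ≤ j ≤ |D| the energy-causality constraint holds with equality at i = d_j, i.e. ∑_{k=1}^{d_j} ∑_{n∈N_k^I} p_{k,n} = ζ·∑_{k=1}^{d_j−1} h_k·q_k + B1, then for every l ∈ {j, j+1, …, |D|}: ∑_{k∈D_{l+1}} ∑_{n∈N_k^I} p_{k,n} = ζ·h_{d_l}·q_{d_l}; that is, the energy consumed for information transmission during each interval D_{l+1} exactly equals the energy harvested at the causally dominating slot d_l. -/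

import Mathlib

noncomputable section

/-- The information sub-channel set `N_k^I = {0,…,N} \ {Π(k)}`. -/
def NI (N : ℕ) (Pi : ℕ → ℕ) (k : ℕ) : Finset ℕ := Finset.Icc 0 N \ {Pi k}

/-- Feasibility for Problem (P) with a single WET sub-channel `Π(k)` per slot. -/
def FeasibleP (K N : ℕ) (h : ℕ → ℕ → ℝ) (Q ζ B1 : ℝ) (Pi : ℕ → ℕ)
    (q : ℕ → ℝ) (p : ℕ → ℕ → ℝ) : Prop :=
  (∀ k ∈ Finset.Icc 1 K, 0 ≤ q k) ∧
  (∀ k ∈ Finset.Icc 1 K, Pi k = 0 → q k = 0) ∧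
  (∀ k ∈ Finset.Icc 1 K, ∀ n ∈ NI N Pi k, 0 ≤ p k n) ∧
  (∑ k ∈ Finset.Icc 1 K, q k ≤ (K : ℝ) * Q) ∧
  (∀ i ∈ Finset.Icc 1 K,
    ∑ k ∈ Finset.Icc 1 i, ∑ n ∈ NI N Pi k, p k n ≤
      ζ * ∑ k ∈ Finset.Icc 1 (i - 1), h k (Pi k) * q k + B1)

/-- Achievable rate for Problem (P). -/
def RateP (K N : ℕ) (g : ℕ → ℕ → ℝ) (Γσ : ℝ) (Pi : ℕ → ℕ) (p : ℕ → ℕ → ℝ) : ℝ :=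
  (1 / ((K : ℝ) * N)) * ∑ k ∈ Finset.Icc 1 K, ∑ n ∈ NI N Pi k,
    Real.logb 2 (1 + g k n * p k n / Γσ)

open Classical in
/-- The set `D` of causally dominating slots. -/
def Dset (K : ℕ) (h : ℕ → ℕ → ℝ) (Pi : ℕ → ℕ) : Finset ℕ :=
  (Finset.Icc 1 (K - 1)).filter
    (fun k => Pi k ≠ 0 ∧ ∀ j, 1 ≤ j → j < k → h j (Pi j) < h k (Pi k))

end

/-!
Optimality is used only through one consequence: since `Π(K) = 0`, any energy still unspent at
slot `K` could be sent on an information SC of slot `K` and would raise the rate. Hence, for every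
harvesting schedule compatible with `p`, the energy constraint at `K` is tight, and no harvesting
power can be transferred from a slot `a` to a slot `b` with `h_a < h_b` without violating some
energy constraint, since that transfer would make more energy available at `K`.

Transferring all power of a non-dominating slot to an earlier, stronger slot never violates a
constraint, so only dominating slots harvest. If the constraint is tight at `d_l` but slack at
`d_{l+1}`, shifting a little power from `d_l` to `d_{l+1}` is paid for by that slack, because
nothing is harvested strictly between them. So tightness propagates from `d_j` to every later
`d_l` and to `K`, and between two consecutive tight slots the consumed energy is exactly what
`d_l` harvested.
-/

open Finset

def energyUsed (N : ℕ) (Pi : ℕ → ℕ) (p : ℕ → ℕ → ℝ) (i : ℕ) : ℝ :=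
  ∑ k ∈ Icc 1 i, ∑ n ∈ NI N Pi k, p k n

def energyHarvested (h : ℕ → ℕ → ℝ) (Pi : ℕ → ℕ) (q : ℕ → ℝ) (i : ℕ) : ℝ :=
  ∑ k ∈ Icc 1 i, h k (Pi k) * q k

def bump (p : ℕ → ℕ → ℝ) (k₀ n₀ : ℕ) (ε : ℝ) (k n : ℕ) : ℝ :=
  p k n + if k = k₀ ∧ n = n₀ then ε else 0

def transfer (q : ℕ → ℝ) (a b : ℕ) (δ : ℝ) (k : ℕ) : ℝ :=
  q k + (if k = b then δ else 0) - (if k = a then δ else 0)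

def ExhaustsEnergy (K N : ℕ) (h : ℕ → ℕ → ℝ) (Q ζ B1 : ℝ) (Pi : ℕ → ℕ) (p : ℕ → ℕ → ℝ) :
    Prop :=
  ∀ q, FeasibleP K N h Q ζ B1 Pi q p →
    ζ * energyHarvested h Pi q (K - 1) + B1 ≤ energyUsed N Pi p K

theorem sum_Icc_one_add_sum_Icc_succ {M : Type*} [AddCommMonoid M] (f : ℕ → M) {a b : ℕ}
    (hab : a ≤ b) : ∑ k ∈ Icc 1 a, f k + ∑ k ∈ Icc (a + 1) b, f k = ∑ k ∈ Icc 1 b, f k := by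
  have hIcc (n : ℕ) : Icc 1 n = Ioc 0 n := Icc_add_one_left_eq_Ioc 0 n
  rw [Icc_add_one_left_eq_Ioc, hIcc, hIcc]
  exact sum_Ioc_consecutive f (Nat.zero_le a) hab

theorem sum_mul_transfer (s : Finset ℕ) (w q : ℕ → ℝ) (a b : ℕ) (δ : ℝ) :
    ∑ k ∈ s, w k * transfer q a b δ k =
      ∑ k ∈ s, w k * q k + (if b ∈ s then w b * δ else 0) - (if a ∈ s then w a * δ else 0) := by
  simp [transfer, mul_add, mul_sub, sum_add_distrib, sum_sub_distrib, mul_ite]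

section

variable {K N M : ℕ} {h g : ℕ → ℕ → ℝ} {Q ζ B1 Γσ : ℝ} {Pi : ℕ → ℕ} {q : ℕ → ℝ}
  {p : ℕ → ℕ → ℝ} {d : ℕ → ℕ} {a b : ℕ} {δ : ℝ}

theorem FeasibleP.energyUsed_le (hf : FeasibleP K N h Q ζ B1 Pi q p) {i : ℕ} (hi : i ∈ Icc 1 K) :
    energyUsed N Pi p i ≤ ζ * energyHarvested h Pi q (i - 1) + B1 :=
  hf.2.2.2.2 i hi

theorem mem_Dset_iff {k : ℕ} : k ∈ Dset K h Pi ↔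
    k ∈ Icc 1 (K - 1) ∧ Pi k ≠ 0 ∧ ∀ j, 1 ≤ j → j < k → h j (Pi j) < h k (Pi k) := by
  simp only [Dset, mem_filter]

theorem energyUsed_mono (hp : ∀ k ∈ Icc 1 K, ∀ n ∈ NI N Pi k, 0 ≤ p k n) {i j : ℕ}
    (hij : i ≤ j) (hjK : j ≤ K) : energyUsed N Pi p i ≤ energyUsed N Pi p j :=
  sum_le_sum_of_subset_of_nonneg (Icc_subset_Icc_right hij) fun k hk _ =>
    sum_nonneg (hp k (Icc_subset_Icc_right hjK hk))

theorem le_bump {k₀ n₀ : ℕ} {ε : ℝ} (hε : 0 ≤ ε) (k n : ℕ) : p k n ≤ bump p k₀ n₀ ε k n := by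
  unfold bump
  split_ifs <;> linarith

theorem energyUsed_bump {k₀ n₀ : ℕ} (hk₀ : 1 ≤ k₀) (hn₀ : n₀ ∈ NI N Pi k₀) (ε : ℝ) (i : ℕ) :
    energyUsed N Pi (bump p k₀ n₀ ε) i = energyUsed N Pi p i + if k₀ ≤ i then ε else 0 := by
  have hk₀' : k₀ ≠ 0 := by omega
  simp [energyUsed, bump, sum_add_distrib, ite_and, hn₀, hk₀']

theorem energyHarvested_transfer (ha : 1 ≤ a) (hb : 1 ≤ b) (n : ℕ) :
    energyHarvested h Pi (transfer q a b δ) n = energyHarvested h Pi q n +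
      (if b ≤ n then h b (Pi b) * δ else 0) - (if a ≤ n then h a (Pi a) * δ else 0) := by
  simp [energyHarvested, sum_mul_transfer, ha, hb]

theorem energyHarvested_eq_of_gap {m n : ℕ} (hmn : m ≤ n)
    (hgap : ∀ k, m < k → k ≤ n → h k (Pi k) * q k = 0) :
    energyHarvested h Pi q m = energyHarvested h Pi q n := by
  unfold energyHarvested
  rw [← sum_Icc_one_add_sum_Icc_succ _ hmn, left_eq_add]
  refine sum_eq_zero fun k hk => ?_
  obtain ⟨h1, h2⟩ := mem_Icc.mp hk
  exact hgap k (by omega) h2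

theorem energyHarvested_pred_eq_of_gap (ha : 1 ≤ a) (hab : a < b)
    (hgap : ∀ k, a < k → k < b → h k (Pi k) * q k = 0) :
    energyHarvested h Pi q (b - 1) = energyHarvested h Pi q (a - 1) + h a (Pi a) * q a := by
  rw [← energyHarvested_eq_of_gap (m := a) (by omega) fun k h1 h2 => hgap k h1 (by omega)]
  obtain ⟨c, rfl⟩ : ∃ c, a = c + 1 := ⟨a - 1, by omega⟩
  exact sum_Icc_succ_top (by omega) _

theorem energyHarvested_le_transfer (ha : 1 ≤ a) (hb : 1 ≤ b) (hab : h a (Pi a) ≤ h b (Pi b))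
    (hhb : 0 ≤ h b (Pi b)) (hδ : 0 ≤ δ) {n : ℕ} (hn : a ≤ n → b ≤ n) :
    energyHarvested h Pi q n ≤ energyHarvested h Pi (transfer q a b δ) n := by
  rw [energyHarvested_transfer ha hb]
  by_cases han : a ≤ n
  · rw [if_pos (hn han), if_pos han]
    linarith [mul_le_mul_of_nonneg_right hab hδ]
  · rw [if_neg han]
    split_ifs <;> linarith [mul_nonneg hhb hδ]

theorem rateP_lt_rateP {p' : ℕ → ℕ → ℝ} (hN : 0 < N) (hΓσ : 0 < Γσ)
    (hle : ∀ k ∈ Icc 1 K, ∀ n ∈ NI N Pi k, 0 ≤ g k n ∧ 0 ≤ p k n ∧ p k n ≤ p' k n)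
    (hlt : ∃ k ∈ Icc 1 K, ∃ n ∈ NI N Pi k, 0 < g k n ∧ p k n < p' k n) :
    RateP K N g Γσ Pi p < RateP K N g Γσ Pi p' := by
  obtain ⟨k₀, hk₀, n₀, hn₀, hg₀, hp₀⟩ := hlt
  have hK : 0 < K := by obtain ⟨h1, h2⟩ := mem_Icc.mp hk₀; omega
  have hlog_le : ∀ k ∈ Icc 1 K, ∀ n ∈ NI N Pi k, Real.logb 2 (1 + g k n * p k n / Γσ) ≤
      Real.logb 2 (1 + g k n * p' k n / Γσ) := by
    intro k hk n hn
    obtain ⟨hg, hp, hpp'⟩ := hle k hk n hn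
    exact Real.logb_le_logb_of_le one_lt_two (by positivity) (by gcongr)
  have hlog_lt : Real.logb 2 (1 + g k₀ n₀ * p k₀ n₀ / Γσ) <
      Real.logb 2 (1 + g k₀ n₀ * p' k₀ n₀ / Γσ) := by
    have hp := (hle k₀ hk₀ n₀ hn₀).2.1
    exact Real.logb_lt_logb one_lt_two (by positivity) (by gcongr)
  unfold RateP
  refine mul_lt_mul_of_pos_left ?_ (by positivity)
  refine sum_lt_sum (fun k hk => sum_le_sum (hlog_le k hk)) ⟨k₀, hk₀, ?_⟩
  exact sum_lt_sum (hlog_le k₀ hk₀) ⟨n₀, hn₀, hlog_lt⟩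

theorem feasibleP_bump {n₀ : ℕ} {ε : ℝ} (hf : FeasibleP K N h Q ζ B1 Pi q p) (hK : 1 ≤ K)
    (hn₀ : n₀ ∈ NI N Pi K) (hε : 0 ≤ ε)
    (hslack : energyUsed N Pi p K + ε ≤ ζ * energyHarvested h Pi q (K - 1) + B1) :
    FeasibleP K N h Q ζ B1 Pi q (bump p K n₀ ε) := by
  refine ⟨hf.1, hf.2.1, fun k hk n hn => (hf.2.2.1 k hk n hn).trans (le_bump hε k n),
    hf.2.2.2.1, fun i hi => ?_⟩
  show energyUsed N Pi _ i ≤ ζ * energyHarvested h Pi q (i - 1) + B1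
  rw [energyUsed_bump hK hn₀]
  split_ifs with hKi
  · obtain rfl : i = K := le_antisymm (mem_Icc.mp hi).2 hKi
    exact hslack
  · simpa using hf.energyUsed_le hi

theorem exhaustsEnergy_of_isMax {n₀ : ℕ} (hN : 0 < N) (hK : 1 ≤ K)
    (hn₀ : n₀ ∈ NI N Pi K) (hgK : 0 < g K n₀)
    (hg : ∀ k ∈ Icc 1 K, ∀ n ∈ NI N Pi k, 0 ≤ g k n) (hΓσ : 0 < Γσ)
    (hopt : ∀ q' p', FeasibleP K N h Q ζ B1 Pi q' p' →
      RateP K N g Γσ Pi p' ≤ RateP K N g Γσ Pi p) :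
    ExhaustsEnergy K N h Q ζ B1 Pi p := by
  intro q hf
  by_contra! hslack
  set ε := ζ * energyHarvested h Pi q (K - 1) + B1 - energyUsed N Pi p K
  have hbump := feasibleP_bump hf hK hn₀ (ε := ε) (by linarith) (by linarith)
  refine (hopt q _ hbump).not_gt (rateP_lt_rateP hN hΓσ (fun k hk n hn => ?_) ?_)
  · exact ⟨hg k hk n hn, hf.2.2.1 k hk n hn, le_bump (by linarith) k n⟩
  · refine ⟨K, mem_Icc.mpr ⟨hK, le_rfl⟩, n₀, hn₀, hgK, ?_⟩
    simp only [bump, and_self, if_true]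
    linarith

theorem feasibleP_transfer (hf : FeasibleP K N h Q ζ B1 Pi q p) (ha : a ∈ Icc 1 K)
    (hb : b ∈ Icc 1 K) (hPb : Pi b ≠ 0) (hδ : 0 ≤ δ) (hδa : δ ≤ q a)
    (henergy : ∀ i ∈ Icc 1 K,
      energyUsed N Pi p i ≤ ζ * energyHarvested h Pi (transfer q a b δ) (i - 1) + B1) :
    FeasibleP K N h Q ζ B1 Pi (transfer q a b δ) p := by
  obtain ⟨hq, hqPi, hp, hbudget, -⟩ := hf
  refine ⟨fun k hk => ?_, fun k hk hPk => ?_, hp, ?_, henergy⟩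
  · have := hq k hk
    unfold transfer
    rcases eq_or_ne k a with rfl | hka
    · split_ifs <;> linarith
    · rw [if_neg hka]
      split_ifs <;> linarith
  · have hkb : k ≠ b := by rintro rfl; exact hPb hPk
    rw [transfer, hqPi k hk hPk, if_neg hkb]
    split_ifs with hka
    · subst hka
      linarith [hqPi k hk hPk]
    · ring
  · have := sum_mul_transfer (Icc 1 K) (fun _ => 1) q a b δ
    simp only [one_mul, if_pos ha, if_pos hb] at this
    linarith

theorem FeasibleP.energyUsed_le_transfer (hf : FeasibleP K N h Q ζ B1 Pi q p) (hζ : 0 ≤ ζ)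
    (ha : 1 ≤ a) (hb : 1 ≤ b) (hab : h a (Pi a) ≤ h b (Pi b)) (hhb : 0 ≤ h b (Pi b))
    (hδ : 0 ≤ δ) {i : ℕ} (hi : i ∈ Icc 1 K) (hn : a < i → b < i) :
    energyUsed N Pi p i ≤ ζ * energyHarvested h Pi (transfer q a b δ) (i - 1) + B1 := by
  have := energyHarvested_le_transfer (q := q) ha hb hab hhb hδ (n := i - 1) (by omega)
  linarith [hf.energyUsed_le hi, mul_le_mul_of_nonneg_left this hζ]

theorem not_energy_le_transfer (hf : FeasibleP K N h Q ζ B1 Pi q p)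
    (hex : ExhaustsEnergy K N h Q ζ B1 Pi p) (hζ : 0 < ζ) (ha : a ∈ Icc 1 (K - 1))
    (hb : b ∈ Icc 1 (K - 1)) (hab : h a (Pi a) < h b (Pi b)) (hPb : Pi b ≠ 0) (hδ : 0 < δ)
    (hδa : δ ≤ q a) :
    ¬ ∀ i ∈ Icc 1 K,
      energyUsed N Pi p i ≤ ζ * energyHarvested h Pi (transfer q a b δ) (i - 1) + B1 := by
  intro henergy
  obtain ⟨ha1, haK⟩ := mem_Icc.mp ha
  obtain ⟨hb1, hbK⟩ := mem_Icc.mp hb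
  have hKmem : K ∈ Icc 1 K := mem_Icc.mpr ⟨by omega, le_rfl⟩
  have hlast := hex _ (feasibleP_transfer hf (mem_Icc.mpr ⟨ha1, by omega⟩)
    (mem_Icc.mpr ⟨hb1, by omega⟩) hPb hδ.le hδa henergy)
  rw [energyHarvested_transfer ha1 hb1, if_pos hbK, if_pos haK] at hlast
  have hgain : 0 < ζ * ((h b (Pi b) - h a (Pi a)) * δ) := by
    have := sub_pos.mpr hab
    positivity
  linarith [hf.energyUsed_le hKmem, show ζ * (energyHarvested h Pi q (K - 1) + h b (Pi b) * δ -
    h a (Pi a) * δ) = ζ * energyHarvested h Pi q (K - 1) + ζ * ((h b (Pi b) - h a (Pi a)) * δ)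
    by ring]

theorem exists_lt_of_notMem_Dset (hzero : ∀ k, h k 0 = 0)
    (hdist : ∀ k ∈ Icc 1 K, ∀ k' ∈ Icc 1 K,
      Pi k ≠ 0 → Pi k' ≠ 0 → k ≠ k' → h k (Pi k) ≠ h k' (Pi k'))
    {k : ℕ} (hk : k ∈ Icc 1 (K - 1)) (hPk : Pi k ≠ 0) (hhk : 0 < h k (Pi k))
    (hkD : k ∉ Dset K h Pi) : ∃ b, 1 ≤ b ∧ b < k ∧ Pi b ≠ 0 ∧ h k (Pi k) < h b (Pi b) := by
  simp only [mem_Dset_iff, hk, hPk, ne_eq, not_false_eq_true, true_and, not_forall,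
    not_lt] at hkD
  obtain ⟨b, hb1, hbk, hle⟩ := hkD
  have hPb : Pi b ≠ 0 := fun h0 => by rw [h0, hzero] at hle; linarith
  obtain ⟨hk1, hkK⟩ := mem_Icc.mp hk
  refine ⟨b, hb1, hbk, hPb, hle.lt_of_ne ?_⟩
  exact hdist k (mem_Icc.mpr ⟨hk1, by omega⟩) b (mem_Icc.mpr ⟨hb1, by omega⟩) hPk hPb (by omega)

theorem harvest_eq_zero_of_notMem_Dset (hf : FeasibleP K N h Q ζ B1 Pi q p)
    (hex : ExhaustsEnergy K N h Q ζ B1 Pi p) (hζ : 0 < ζ) (hzero : ∀ k, h k 0 = 0)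
    (hhpos : ∀ k ∈ Icc 1 K, Pi k ≠ 0 → 0 < h k (Pi k))
    (hdist : ∀ k ∈ Icc 1 K, ∀ k' ∈ Icc 1 K,
      Pi k ≠ 0 → Pi k' ≠ 0 → k ≠ k' → h k (Pi k) ≠ h k' (Pi k'))
    {k : ℕ} (hk : k ∈ Icc 1 (K - 1)) (hkD : k ∉ Dset K h Pi) : h k (Pi k) * q k = 0 := by
  obtain ⟨hk1, hkK⟩ := mem_Icc.mp hk
  have hk' : k ∈ Icc 1 K := mem_Icc.mpr ⟨hk1, by omega⟩
  by_cases hPk : Pi k = 0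
  · rw [hPk, hzero, zero_mul]
  obtain hq0 | hqpos := (hf.1 k hk').eq_or_lt
  · rw [← hq0, mul_zero]
  obtain ⟨b, hb1, hbk, hPb, hlt⟩ :=
    exists_lt_of_notMem_Dset hzero hdist hk hPk (hhpos k hk' hPk) hkD
  have hbK : b ∈ Icc 1 K := mem_Icc.mpr ⟨hb1, by omega⟩
  exact (not_energy_le_transfer hf hex hζ hk (mem_Icc.mpr ⟨hb1, by omega⟩) hlt hPb hqpos le_rfl
    fun i hi => hf.energyUsed_le_transfer hζ.le hk1 hb1 hlt.le (hhpos b hbK hPb).le hqpos.le hi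
      (by omega)).elim

theorem energyUsed_eq_of_gap (hf : FeasibleP K N h Q ζ B1 Pi q p)
    (hex : ExhaustsEnergy K N h Q ζ B1 Pi p) (hζ : 0 < ζ) (ha : a ∈ Icc 1 (K - 1))
    (hb : b ∈ Icc 1 (K - 1)) (hab : a < b) (hh : h a (Pi a) < h b (Pi b))
    (hha : 0 ≤ h a (Pi a)) (hPb : Pi b ≠ 0)
    (hgap : ∀ k, a < k → k < b → h k (Pi k) * q k = 0)
    (htight : energyUsed N Pi p a = ζ * energyHarvested h Pi q (a - 1) + B1) :
    energyUsed N Pi p b = ζ * energyHarvested h Pi q (b - 1) + B1 := by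
  obtain ⟨ha1, haK⟩ := mem_Icc.mp ha
  obtain ⟨hb1, hbK⟩ := mem_Icc.mp hb
  refine (hf.energyUsed_le (mem_Icc.mpr ⟨hb1, by omega⟩)).antisymm (not_lt.mp fun hslack => ?_)
  have hHb := energyHarvested_pred_eq_of_gap ha1 hab hgap
  have hqa : 0 < q a := by
    refine (hf.1 a (mem_Icc.mpr ⟨ha1, by omega⟩)).lt_of_ne fun hq0 => ?_
    rw [← hq0, mul_zero, add_zero] at hHb
    rw [hHb] at hslack
    linarith [energyUsed_mono hf.2.2.1 hab.le (by omega : b ≤ K)]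
  -- move a little of `q a` to `b`, paid for by the slack at `b`
  obtain ⟨c, hc, hcs⟩ := exists_pos_mul_lt (sub_pos.mpr hslack) (ζ * h a (Pi a))
  set δ := min (q a) c
  have hδ : ζ * (h a (Pi a) * δ) ≤ ζ * h a (Pi a) * c := by
    rw [← mul_assoc]
    exact mul_le_mul_of_nonneg_left (min_le_right _ _) (by positivity)
  refine not_energy_le_transfer hf hex hζ ha hb hh hPb (lt_min hqa hc) (min_le_left _ _)
    fun i hi => ?_
  obtain ⟨hi1, hiK⟩ := mem_Icc.mp hi
  by_cases hmid : a < i ∧ i ≤ b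
  · rw [energyHarvested_transfer ha1 hb1, if_neg (by omega), if_pos (by omega), add_zero,
      energyHarvested_eq_of_gap (m := i - 1) (n := b - 1) (by omega)
        fun k h1 h2 => hgap k (by omega) (by omega)]
    linarith [energyUsed_mono hf.2.2.1 hmid.2 (by omega : b ≤ K),
      mul_sub ζ (energyHarvested h Pi q (b - 1)) (h a (Pi a) * δ)]
  · exact hf.energyUsed_le_transfer hζ.le ha1 hb1 hh.le (hha.trans hh.le) (lt_min hqa hc).le hi
      (by omega)

theorem harvest_eq_zero_of_lt_of_lt (hf : FeasibleP K N h Q ζ B1 Pi q p)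
    (hex : ExhaustsEnergy K N h Q ζ B1 Pi p) (hζ : 0 < ζ) (hzero : ∀ k, h k 0 = 0)
    (hhpos : ∀ k ∈ Icc 1 K, Pi k ≠ 0 → 0 < h k (Pi k))
    (hdist : ∀ k ∈ Icc 1 K, ∀ k' ∈ Icc 1 K,
      Pi k ≠ 0 → Pi k' ≠ 0 → k ≠ k' → h k (Pi k) ≠ h k' (Pi k'))
    (hdK : d (M + 1) = K) (hdmono : ∀ i j, i < j → j ≤ M + 1 → d i < d j)
    (hdsurj : ∀ k ∈ Dset K h Pi, ∃ i, 1 ≤ i ∧ i ≤ M ∧ d i = k)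
    {l k : ℕ} (hl : l ≤ M) (hlk : d l < k) (hkl : k < d (l + 1)) : h k (Pi k) * q k = 0 := by
  have hdle : ∀ i j, i ≤ j → j ≤ M + 1 → d i ≤ d j := fun i j hij hj =>
    hij.eq_or_lt.elim (fun h => h ▸ le_rfl) fun h => (hdmono i j h hj).le
  have hlK : d (l + 1) ≤ K := hdK ▸ hdle _ _ (by omega) le_rfl
  refine harvest_eq_zero_of_notMem_Dset hf hex hζ hzero hhpos hdist
    (mem_Icc.mpr ⟨by omega, by omega⟩) fun hkD => ?_
  obtain ⟨i, -, hiM, rfl⟩ := hdsurj k hkD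
  have := hdle i l
  have := hdle (l + 1) i
  omega

theorem energyUsed_eq_of_le_dominating (hf : FeasibleP K N h Q ζ B1 Pi q p)
    (hex : ExhaustsEnergy K N h Q ζ B1 Pi p) (hζ : 0 < ζ)
    (hhpos : ∀ k ∈ Icc 1 K, Pi k ≠ 0 → 0 < h k (Pi k))
    (hdK : d (M + 1) = K) (hdmono : ∀ i j, i < j → j ≤ M + 1 → d i < d j)
    (hdmem : ∀ i, 1 ≤ i → i ≤ M → d i ∈ Dset K h Pi)
    (hgap : ∀ l ≤ M, ∀ k, d l < k → k < d (l + 1) → h k (Pi k) * q k = 0)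
    {j : ℕ} (hj1 : 1 ≤ j)
    (heq : energyUsed N Pi p (d j) = ζ * energyHarvested h Pi q (d j - 1) + B1) :
    ∀ l, j ≤ l → l ≤ M + 1 →
      energyUsed N Pi p (d l) = ζ * energyHarvested h Pi q (d l - 1) + B1 := by
  intro l hjl
  induction l, hjl using Nat.le_induction with
  | base => exact fun _ => heq
  | succ l hjl ih =>
    intro hlM
    obtain ⟨hl, hPl, -⟩ := mem_Dset_iff.mp (hdmem l (by omega) (by omega))
    obtain ⟨hl1, hlK⟩ := mem_Icc.mp hl
    rcases hlM.lt_or_eq with hlM | hlM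
    · obtain ⟨hl', hPl', hdom⟩ := mem_Dset_iff.mp (hdmem (l + 1) (by omega) (by omega))
      have hlt := hdmono l (l + 1) (by omega) (by omega)
      exact energyUsed_eq_of_gap hf hex hζ hl hl' hlt (hdom _ hl1 hlt)
        (hhpos _ (mem_Icc.mpr ⟨hl1, by omega⟩) hPl).le hPl' (hgap l (by omega)) (ih (by omega))
    · rw [Nat.succ_inj.mp hlM, hdK]
      exact (hf.energyUsed_le (mem_Icc.mpr ⟨by omega, le_rfl⟩)).antisymm (hex q hf)

theorem sum_Icc_energy_eq_of_gap (ha : 1 ≤ a) (hab : a < b)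
    (hgap : ∀ k, a < k → k < b → h k (Pi k) * q k = 0)
    (hta : energyUsed N Pi p a = ζ * energyHarvested h Pi q (a - 1) + B1)
    (htb : energyUsed N Pi p b = ζ * energyHarvested h Pi q (b - 1) + B1) :
    ∑ k ∈ Icc (a + 1) b, ∑ n ∈ NI N Pi k, p k n = ζ * h a (Pi a) * q a := by
  have hsplit := sum_Icc_one_add_sum_Icc_succ (fun k => ∑ n ∈ NI N Pi k, p k n) hab.le
  rw [energyHarvested_pred_eq_of_gap ha hab hgap] at htb
  unfold energyUsed at hta htb
  linarith [mul_add ζ (energyHarvested h Pi q (a - 1)) (h a (Pi a) * q a)]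

end

theorem stmt4_general
    (K N : ℕ) (hK : 2 ≤ K) (hN : 2 ≤ N)
    (h g : ℕ → ℕ → ℝ)
    (hpos : ∀ k ∈ Finset.Icc 1 K, ∀ n ∈ Finset.Icc 1 N, 0 < h k n ∧ 0 < g k n)
    (hzero : ∀ k, h k 0 = 0 ∧ g k 0 = 0)
    (Q ζ B1 Γσ : ℝ) (hζ : 0 < ζ) (hΓσ : 0 < Γσ)
    (Pi : ℕ → ℕ) (hPiK : Pi K = 0) (hPiR : ∀ k ∈ Finset.Icc 1 K, Pi k ≤ N)
    (M : ℕ)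
    (d : ℕ → ℕ) (hdK : d (M + 1) = K)
    (hdmono : ∀ i j, i < j → j ≤ M + 1 → d i < d j)
    (hdmem : ∀ i, 1 ≤ i → i ≤ M → d i ∈ Dset K h Pi)
    (hdsurj : ∀ k ∈ Dset K h Pi, ∃ i, 1 ≤ i ∧ i ≤ M ∧ d i = k)
    (hdist : ∀ k ∈ Finset.Icc 1 K, ∀ k' ∈ Finset.Icc 1 K,
      Pi k ≠ 0 → Pi k' ≠ 0 → k ≠ k' → h k (Pi k) ≠ h k' (Pi k'))
    (q : ℕ → ℝ) (p : ℕ → ℕ → ℝ)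
    (hfeas : FeasibleP K N h Q ζ B1 Pi q p)
    (hopt : ∀ q' p', FeasibleP K N h Q ζ B1 Pi q' p' →
      RateP K N g Γσ Pi p' ≤ RateP K N g Γσ Pi p)
    (j : ℕ) (hj1 : 1 ≤ j)
    (heq : ∑ k ∈ Finset.Icc 1 (d j), ∑ n ∈ NI N Pi k, p k n =
      ζ * ∑ k ∈ Finset.Icc 1 (d j - 1), h k (Pi k) * q k + B1) :
    ∀ l, j ≤ l → l ≤ M →
      ∑ k ∈ Finset.Icc (d l + 1) (d (l + 1)), ∑ n ∈ NI N Pi k, p k n =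
        ζ * h (d l) (Pi (d l)) * q (d l) := by
  have hhpos : ∀ k ∈ Icc 1 K, Pi k ≠ 0 → 0 < h k (Pi k) := fun k hk hPk =>
    (hpos k hk (Pi k) (mem_Icc.mpr ⟨Nat.one_le_iff_ne_zero.mpr hPk, hPiR k hk⟩)).1
  have hg : ∀ k ∈ Icc 1 K, ∀ n ∈ NI N Pi k, 0 ≤ g k n := by
    intro k hk n hn
    obtain ⟨-, hnN⟩ := mem_Icc.mp (mem_sdiff.mp hn).1
    rcases n.eq_zero_or_pos with rfl | hn0
    · exact (hzero k).2.ge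
    · exact (hpos k hk n (mem_Icc.mpr ⟨hn0, hnN⟩)).2.le
  have hex : ExhaustsEnergy K N h Q ζ B1 Pi p :=
    exhaustsEnergy_of_isMax (n₀ := 1) (by omega) (by omega) (by simp [NI, hPiK]; omega)
      (hpos K (mem_Icc.mpr ⟨by omega, le_rfl⟩) 1 (mem_Icc.mpr ⟨le_rfl, by omega⟩)).2 hg hΓσ hopt
  have hgap : ∀ l ≤ M, ∀ k, d l < k → k < d (l + 1) → h k (Pi k) * q k = 0 := fun l hl k =>
    harvest_eq_zero_of_lt_of_lt hfeas hex hζ (fun k => (hzero k).1) hhpos hdist hdK hdmono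
      hdsurj hl
  have htight := energyUsed_eq_of_le_dominating hfeas hex hζ hhpos hdK hdmono hdmem hgap hj1 heq
  intro l hjl hlM
  exact sum_Icc_energy_eq_of_gap (mem_Icc.mp (mem_Dset_iff.mp (hdmem l (by omega) hlM)).1).1
    (hdmono l (l + 1) (by omega) (by omega)) (hgap l hlM) (htight l hjl (by omega))
    (htight (l + 1) (by omega) (by omega))

theorem stmt4
    (K N : ℕ) (hK : 2 ≤ K) (hN : 2 ≤ N)
    (h g : ℕ → ℕ → ℝ)
    (hpos : ∀ k ∈ Finset.Icc 1 K, ∀ n ∈ Finset.Icc 1 N, 0 < h k n ∧ 0 < g k n)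
    (hzero : ∀ k, h k 0 = 0 ∧ g k 0 = 0)
    (Q ζ B1 Γσ : ℝ) (hQ : 0 < Q) (hζ : 0 < ζ) (hB1 : 0 ≤ B1) (hΓσ : 0 < Γσ)
    (Pi : ℕ → ℕ) (hPiK : Pi K = 0) (hPiR : ∀ k ∈ Finset.Icc 1 K, Pi k ≤ N)
    (M : ℕ) (hM : M = (Dset K h Pi).card)
    (d : ℕ → ℕ) (hd0 : d 0 = 0) (hdK : d (M + 1) = K)
    (hdmono : ∀ i j, i < j → j ≤ M + 1 → d i < d j)
    (hdmem : ∀ i, 1 ≤ i → i ≤ M → d i ∈ Dset K h Pi)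
    (hdsurj : ∀ k ∈ Dset K h Pi, ∃ i, 1 ≤ i ∧ i ≤ M ∧ d i = k)
    (hdist : ∀ k ∈ Finset.Icc 1 K, ∀ k' ∈ Finset.Icc 1 K,
      Pi k ≠ 0 → Pi k' ≠ 0 → k ≠ k' → h k (Pi k) ≠ h k' (Pi k'))
    (q : ℕ → ℝ) (p : ℕ → ℕ → ℝ)
    (hfeas : FeasibleP K N h Q ζ B1 Pi q p)
    (hopt : ∀ q' p', FeasibleP K N h Q ζ B1 Pi q' p' →
      RateP K N g Γσ Pi p' ≤ RateP K N g Γσ Pi p)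
    (j : ℕ) (hj1 : 1 ≤ j) (hjM : j ≤ M)
    (heq : ∑ k ∈ Finset.Icc 1 (d j), ∑ n ∈ NI N Pi k, p k n =
      ζ * ∑ k ∈ Finset.Icc 1 (d j - 1), h k (Pi k) * q k + B1) :
    ∀ l, j ≤ l → l ≤ M →
      ∑ k ∈ Finset.Icc (d l + 1) (d (l + 1)), ∑ n ∈ NI N Pi k, p k n =
        ζ * h (d l) (Pi (d l)) * q (d l) :=
  stmt4_general K N hK hN h g hpos hzero Q ζ B1 Γσ hζ hΓσ Pi hPiK hPiR M d hdK hdmono hdmem hdsurj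
    hdist q p hfeas hopt j hj1 heq
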